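/- Uniqueness theorem for operator pencils: let λ₀ ∉ {0, 1/2, 1} and let Δ = Aⁱʲ∂_i∂_j + Aⁱ∂_i + A be a second order operator acting on densities of weight λ₀. Then there exists a unique self-adjoint operator Δ̂ on the algebra of densities, polynomial of degree ≤ 2 in ŵ, with Δ̂(1) = 0 and Δ̂|_{ŵ=λ₀} = Δ. Explicitly it is given by the canonical form with Sⁱᵏ = Aⁱᵏ, Bⁱ = (Aⁱ − ∂_kAᵏⁱ)/(2λ₀−1), and C = A/(λ₀(λ₀−1)) − (∂_iAⁱ − ∂_i∂_kAᵏⁱ)/((λ₀−1)(2λ₀−1)). -/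

import Mathlib

noncomputable section

/-- i-th partial derivative of a function on ℝⁿ. -/
def pd (n : ℕ) (i : Fin n) (f : (Fin n → ℝ) → ℝ) : (Fin n → ℝ) → ℝ :=
  fun x => fderiv ℝ f x (Pi.single i 1)

section helpers
variable {n : ℕ} {i j k l : Fin n} {f g : (Fin n → ℝ) → ℝ} {x : Fin n → ℝ} {c : ℝ}

lemma pd_const : pd n i (fun _ => c) x = 0 := by simp [pd]

lemma pd_const' : pd n i (fun _ => c) = fun _ => (0:ℝ) := funext fun _ => pd_const

lemma pd_sub (hf : DifferentiableAt ℝ f x) (hg : DifferentiableAt ℝ g x) :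
    pd n i (fun y => f y - g y) x = pd n i f x - pd n i g x := by
  simp [pd, fderiv_fun_sub hf hg]

lemma pd_div_const (hf : DifferentiableAt ℝ f x) :
    pd n i (fun y => f y / c) x = pd n i f x / c := by
  simp only [div_eq_mul_inv, pd, fderiv_mul_const hf]
  simp [mul_comm]

lemma pd_sum {ι : Type*} (s : Finset ι) (F : ι → (Fin n → ℝ) → ℝ)
    (hF : ∀ m ∈ s, DifferentiableAt ℝ (F m) x) :
    pd n i (fun y => ∑ m ∈ s, F m y) x = ∑ m ∈ s, pd n i (F m) x := by
  simp [pd, fderiv_fun_sum hF]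

lemma contDiff_pd (hf : ContDiff ℝ (⊤ : ℕ∞) f) : ContDiff ℝ (⊤ : ℕ∞) (pd n i f) :=
  (hf.fderiv_right (by simp)).clm_apply contDiff_const

lemma pd_coord : pd n i (fun y => y j) x = (Pi.single i 1 : Fin n → ℝ) j := by
  rw [pd, show (fun y : Fin n → ℝ => y j) = (ContinuousLinearMap.proj j : (Fin n → ℝ) →L[ℝ] ℝ) from rfl,
    ContinuousLinearMap.fderiv]
  rfl

lemma pd_coord' : pd n i (fun y : Fin n → ℝ => y j)
    = fun _ => (Pi.single i 1 : Fin n → ℝ) j := funext fun _ => pd_coord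

lemma diffAt_coord : DifferentiableAt ℝ (fun y : Fin n → ℝ => y j) x :=
  (ContinuousLinearMap.proj j : (Fin n → ℝ) →L[ℝ] ℝ).differentiableAt

lemma contDiff_coord : ContDiff ℝ (⊤ : ℕ∞) (fun y : Fin n → ℝ => y j) :=
  (ContinuousLinearMap.proj j : (Fin n → ℝ) →L[ℝ] ℝ).contDiff

lemma pd_coord_mul : pd n k (fun y => y j * y l) x
    = (Pi.single k 1 : Fin n → ℝ) j * x l + x j * (Pi.single k 1 : Fin n → ℝ) l := by
  rw [pd, fderiv_fun_mul diffAt_coord diffAt_coord]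
  have h1 := @pd_coord n k j x
  have h2 := @pd_coord n k l x
  simp only [pd] at h1 h2
  simp [h1, h2]
  ring

lemma pd_coord_mul' : pd n k (fun y : Fin n → ℝ => y j * y l)
    = fun y => (Pi.single k 1 : Fin n → ℝ) j * y l + y j * (Pi.single k 1 : Fin n → ℝ) l :=
  funext fun _ => pd_coord_mul

lemma pd_pd_coord_mul : pd n i (pd n k (fun y : Fin n → ℝ => y j * y l)) x
    = (Pi.single k 1 : Fin n → ℝ) j * (Pi.single i 1 : Fin n → ℝ) l
      + (Pi.single i 1 : Fin n → ℝ) j * (Pi.single k 1 : Fin n → ℝ) l := by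
  rw [pd_coord_mul', pd]
  have hd1 : DifferentiableAt ℝ (fun y : Fin n → ℝ => (Pi.single k 1 : Fin n → ℝ) j * y l) x :=
    (diffAt_coord).const_mul _
  have hd2 : DifferentiableAt ℝ (fun y : Fin n → ℝ => y j * (Pi.single k 1 : Fin n → ℝ) l) x :=
    (diffAt_coord).mul_const _
  rw [fderiv_fun_add hd1 hd2]
  have h1 := @pd_coord n i l x
  have h2 := @pd_coord n i j x
  simp only [pd] at h1 h2
  rw [fderiv_const_mul diffAt_coord, fderiv_mul_const diffAt_coord]
  simp [h1, h2]
  ring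

end helpers

/-- The canonical self-adjoint normalised second order operator
Δ̂ = Sⁱᵏ∂_i∂_k + (∂_kSᵏⁱ)∂_i + (2ŵ−1)Bⁱ∂_i + ŵ(∂_iBⁱ) + ŵ(ŵ−1)C
acting on a weight-λ density (ŵ replaced by λ).  Self-adjoint normalised
second order pencils are exactly the operators of this form. -/
def Dcan (n : ℕ) (S : (Fin n → ℝ) → Fin n → Fin n → ℝ)
    (B : Fin n → (Fin n → ℝ) → ℝ) (C : (Fin n → ℝ) → ℝ)
    (lam : ℝ) (s : (Fin n → ℝ) → ℝ) : (Fin n → ℝ) → ℝ :=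
  fun x => (∑ i, ∑ k, S x i k * pd n i (pd n k s) x)
    + (∑ i, (∑ k, pd n k (fun y => S y k i) x) * pd n i s x)
    + (2 * lam - 1) * (∑ i, B i x * pd n i s x)
    + lam * (∑ i, pd n i (B i) x) * s x
    + lam * (lam - 1) * C x * s x

/-- The given second order operator Δ = Aⁱʲ∂_i∂_j + Aⁱ∂_i + A on weight-λ₀
densities. -/
def Dop (n : ℕ) (A2 : (Fin n → ℝ) → Fin n → Fin n → ℝ)
    (A1 : Fin n → (Fin n → ℝ) → ℝ) (A0 : (Fin n → ℝ) → ℝ)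
    (s : (Fin n → ℝ) → ℝ) : (Fin n → ℝ) → ℝ :=
  fun x => (∑ i, ∑ j, A2 x i j * pd n i (pd n j s) x)
    + (∑ i, A1 i x * pd n i s x) + A0 x * s x

theorem aux_exist (n : ℕ) (lam0 : ℝ)
    (h0 : lam0 ≠ 0) (hhalf : lam0 ≠ 1/2) (h1 : lam0 ≠ 1)
    (A2 : (Fin n → ℝ) → Fin n → Fin n → ℝ)
    (A1 : Fin n → (Fin n → ℝ) → ℝ) (A0 : (Fin n → ℝ) → ℝ)
    (hA2 : ∀ i j, ContDiff ℝ (⊤ : ℕ∞) (fun x => A2 x i j))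
    (hA1 : ∀ i, ContDiff ℝ (⊤ : ℕ∞) (A1 i)) :
    (∀ (s : (Fin n → ℝ) → ℝ), ContDiff ℝ (⊤ : ℕ∞) s → ∀ x,
        Dcan n A2
          (fun i x => (A1 i x - ∑ k, pd n k (fun y => A2 y k i) x) /
            (2 * lam0 - 1))
          (fun x => A0 x / (lam0 * (lam0 - 1)) -
            ((∑ i, pd n i (A1 i) x) -
              ∑ i, ∑ k, pd n i (pd n k (fun y => A2 y k i)) x) /
            ((lam0 - 1) * (2 * lam0 - 1)))
          lam0 s x = Dop n A2 A1 A0 s x) := by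
  have h2 : 2 * lam0 - 1 ≠ 0 := by
    intro h; apply hhalf; linarith
  have hm1 : lam0 - 1 ≠ 0 := sub_ne_zero.mpr h1
  have hdiffP : ∀ x (i : Fin n),
      DifferentiableAt ℝ (fun y => A1 i y - ∑ k, pd n k (fun z => A2 z k i) y) x := by
    intro x i
    exact ((hA1 i).differentiable (by simp) x).sub
      (DifferentiableAt.fun_sum fun k _ => (contDiff_pd (hA2 k i)).differentiable (by simp) x)
  have hpdB : ∀ x (i : Fin n),
      pd n i (fun y => (A1 i y - ∑ k, pd n k (fun z => A2 z k i) y) / (2*lam0-1)) x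
        = (pd n i (A1 i) x - ∑ k, pd n i (pd n k (fun z => A2 z k i)) x) / (2*lam0-1) := by
    intro x i
    rw [pd_div_const (hdiffP x i),
      pd_sub ((hA1 i).differentiable (by simp) x)
        (DifferentiableAt.fun_sum fun k _ => (contDiff_pd (hA2 k i)).differentiable (by simp) x),
      pd_sum _ _ (fun k _ => (contDiff_pd (hA2 k i)).differentiable (by simp) x)]
  intro s hs x
  simp only [Dcan, Dop]
  rw [show (∑ i, pd n i (fun x => (A1 i x - ∑ k, pd n k (fun y => A2 y k i) x) / (2*lam0-1)) x)
      = ∑ i, (pd n i (A1 i) x - ∑ k, pd n i (pd n k (fun z => A2 z k i)) x) / (2*lam0-1) from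
    Finset.sum_congr rfl fun i _ => hpdB x i]
  rw [show (∑ i, (A1 i x - ∑ k, pd n k (fun y => A2 y k i) x) / (2*lam0-1) * pd n i s x)
      = ((∑ i, A1 i x * pd n i s x) - ∑ i, (∑ k, pd n k (fun y => A2 y k i) x) * pd n i s x)
        / (2*lam0-1) from by
    rw [← Finset.sum_sub_distrib, Finset.sum_div]
    exact Finset.sum_congr rfl fun i _ => by ring]
  rw [show (∑ i, (pd n i (A1 i) x - ∑ k, pd n i (pd n k (fun z => A2 z k i)) x) / (2*lam0-1))
      = ((∑ i, pd n i (A1 i) x) - ∑ i, ∑ k, pd n i (pd n k (fun z => A2 z k i)) x) / (2*lam0-1)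
      from by rw [← Finset.sum_sub_distrib, Finset.sum_div]]
  field_simp
  ring

theorem aux_uniq (n : ℕ) (lam0 : ℝ)
    (h0 : lam0 ≠ 0) (hhalf : lam0 ≠ 1/2) (h1 : lam0 ≠ 1)
    (A2 : (Fin n → ℝ) → Fin n → Fin n → ℝ)
    (A1 : Fin n → (Fin n → ℝ) → ℝ) (A0 : (Fin n → ℝ) → ℝ)
    (hA2symm : ∀ x i j, A2 x i j = A2 x j i)
    (hA2 : ∀ i j, ContDiff ℝ (⊤ : ℕ∞) (fun x => A2 x i j))
    (hA1 : ∀ i, ContDiff ℝ (⊤ : ℕ∞) (A1 i)) :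
    (∀ (S : (Fin n → ℝ) → Fin n → Fin n → ℝ)
        (B : Fin n → (Fin n → ℝ) → ℝ) (C : (Fin n → ℝ) → ℝ),
      (∀ x i k, S x i k = S x k i) →
      (∀ (s : (Fin n → ℝ) → ℝ), ContDiff ℝ (⊤ : ℕ∞) s → ∀ x,
        Dcan n S B C lam0 s x = Dop n A2 A1 A0 s x) →
      (∀ x i k, S x i k = A2 x i k) ∧
      (∀ i x, B i x = (A1 i x - ∑ k, pd n k (fun y => A2 y k i) x) /
        (2 * lam0 - 1)) ∧
      (∀ x, C x = A0 x / (lam0 * (lam0 - 1)) -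
        ((∑ i, pd n i (A1 i) x) -
          ∑ i, ∑ k, pd n i (pd n k (fun y => A2 y k i)) x) /
        ((lam0 - 1) * (2 * lam0 - 1)))) := by
  have h2 : 2 * lam0 - 1 ≠ 0 := by intro h; apply hhalf; linarith
  have hm1 : lam0 - 1 ≠ 0 := sub_ne_zero.mpr h1
  intro S B C hSsymm H
  have E0 : ∀ x, lam0 * (∑ i, pd n i (B i) x) + lam0 * (lam0 - 1) * C x = A0 x := by
    intro x
    have h := H (fun _ => 1) contDiff_const x
    simp only [Dcan, Dop, pd_const', pd_const] at h
    simpa using h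
  have E1 : ∀ x (j : Fin n),
      (∑ k, pd n k (fun y => S y k j) x) + (2 * lam0 - 1) * B j x = A1 j x := by
    intro x j
    have h := H (fun y => y j) contDiff_coord x
    simp only [Dcan, Dop, pd_coord', pd_const, pd_coord, Pi.single_apply, mul_ite,
      mul_one, mul_zero, Finset.sum_const_zero, zero_add, Finset.sum_ite_eq,
      Finset.mem_univ, if_true] at h
    have e0 := E0 x
    linear_combination h - x j * e0
  have hS : ∀ x i k, S x i k = A2 x i k := by
    intro x j l
    have h := H (fun y => y j * y l) (contDiff_coord.mul contDiff_coord) x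
    simp only [Dcan, Dop, pd_pd_coord_mul, pd_coord_mul, Pi.single_apply, mul_ite, ite_mul,
      mul_one, mul_zero, one_mul, zero_mul, mul_add, Finset.sum_add_distrib,
      Finset.sum_ite_eq, Finset.mem_univ, if_true] at h
    simp [Finset.sum_ite_eq] at h
    have e0 := E0 x
    have e1j := E1 x j
    have e1l := E1 x l
    have key : S x l j + S x j l = A2 x l j + A2 x j l := by
      linear_combination h - x l * e1j - x j * e1l - (x j * x l) * e0
    have s1 := hSsymm x j l
    have s2 := hA2symm x j l
    linarith
  have hB : ∀ (i : Fin n) x, B i x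
      = (A1 i x - ∑ k, pd n k (fun y => A2 y k i) x) / (2 * lam0 - 1) := by
    intro i x
    rw [eq_div_iff h2]
    have e1 := E1 x i
    have : (∑ k, pd n k (fun y => S y k i) x) = ∑ k, pd n k (fun y => A2 y k i) x := by
      refine Finset.sum_congr rfl fun k _ => ?_
      congr 1
      exact funext fun y => hS y k i
    rw [this] at e1
    linarith
  refine ⟨hS, hB, ?_⟩
  intro x
  have e0 := E0 x
  have hdiffP : ∀ (i : Fin n),
      DifferentiableAt ℝ (fun y => A1 i y - ∑ k, pd n k (fun z => A2 z k i) y) x :=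
    fun i => ((hA1 i).differentiable (by simp) x).sub
      (DifferentiableAt.fun_sum fun k _ => (contDiff_pd (hA2 k i)).differentiable (by simp) x)
  have hpdBi : ∀ (i : Fin n), pd n i (B i) x
      = (pd n i (A1 i) x - ∑ k, pd n i (pd n k (fun z => A2 z k i)) x) / (2 * lam0 - 1) := by
    intro i
    have hBf : B i = fun y => (A1 i y - ∑ k, pd n k (fun z => A2 z k i) y) / (2 * lam0 - 1) :=
      funext fun y => hB i y
    rw [hBf, pd_div_const (hdiffP i),
      pd_sub ((hA1 i).differentiable (by simp) x)
        (DifferentiableAt.fun_sum fun k _ => (contDiff_pd (hA2 k i)).differentiable (by simp) x),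
      pd_sum _ _ (fun k _ => (contDiff_pd (hA2 k i)).differentiable (by simp) x)]
  have hrw : (∑ i, pd n i (B i) x)
      = ((∑ i, pd n i (A1 i) x) - ∑ i, ∑ k, pd n i (pd n k (fun y => A2 y k i)) x)
        / (2 * lam0 - 1) := by
    rw [Finset.sum_congr rfl (fun i _ => hpdBi i), ← Finset.sum_div, Finset.sum_sub_distrib]
  rw [hrw] at e0
  have target : C x = (A0 x - lam0 * (((∑ i, pd n i (A1 i) x)
      - ∑ i, ∑ k, pd n i (pd n k (fun y => A2 y k i)) x) / (2 * lam0 - 1)))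
      / (lam0 * (lam0 - 1)) := by
    rw [eq_div_iff (mul_ne_zero h0 hm1)]
    linear_combination e0
  rw [target]
  field_simp

/-- Uniqueness theorem: for λ₀ ∉ {0, 1/2, 1} there is a unique self-adjoint
normalised pencil (i.e. a unique triple (S, B, C) in the canonical form)
passing through a given second order operator Δ = Aⁱʲ∂_i∂_j + Aⁱ∂_i + A on
weight-λ₀ densities; explicitly S = A², Bⁱ = (Aⁱ − ∂_kAᵏⁱ)/(2λ₀−1) and
C = A/(λ₀(λ₀−1)) − (∂_iAⁱ − ∂_i∂_kAᵏⁱ)/((λ₀−1)(2λ₀−1)). -/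
theorem unique_selfadjoint_pencil (n : ℕ) (lam0 : ℝ)
    (h0 : lam0 ≠ 0) (hhalf : lam0 ≠ 1/2) (h1 : lam0 ≠ 1)
    (A2 : (Fin n → ℝ) → Fin n → Fin n → ℝ)
    (A1 : Fin n → (Fin n → ℝ) → ℝ) (A0 : (Fin n → ℝ) → ℝ)
    (hA2symm : ∀ x i j, A2 x i j = A2 x j i)
    (hA2 : ∀ i j, ContDiff ℝ (⊤ : ℕ∞) (fun x => A2 x i j))
    (hA1 : ∀ i, ContDiff ℝ (⊤ : ℕ∞) (A1 i)) (hA0 : ContDiff ℝ (⊤ : ℕ∞) A0) :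
    (∀ (s : (Fin n → ℝ) → ℝ), ContDiff ℝ (⊤ : ℕ∞) s → ∀ x,
        Dcan n A2
          (fun i x => (A1 i x - ∑ k, pd n k (fun y => A2 y k i) x) /
            (2 * lam0 - 1))
          (fun x => A0 x / (lam0 * (lam0 - 1)) -
            ((∑ i, pd n i (A1 i) x) -
              ∑ i, ∑ k, pd n i (pd n k (fun y => A2 y k i)) x) /
            ((lam0 - 1) * (2 * lam0 - 1)))
          lam0 s x = Dop n A2 A1 A0 s x) ∧
    (∀ (S : (Fin n → ℝ) → Fin n → Fin n → ℝ)
        (B : Fin n → (Fin n → ℝ) → ℝ) (C : (Fin n → ℝ) → ℝ),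
      (∀ x i k, S x i k = S x k i) →
      (∀ (s : (Fin n → ℝ) → ℝ), ContDiff ℝ (⊤ : ℕ∞) s → ∀ x,
        Dcan n S B C lam0 s x = Dop n A2 A1 A0 s x) →
      (∀ x i k, S x i k = A2 x i k) ∧
      (∀ i x, B i x = (A1 i x - ∑ k, pd n k (fun y => A2 y k i) x) /
        (2 * lam0 - 1)) ∧
      (∀ x, C x = A0 x / (lam0 * (lam0 - 1)) -
        ((∑ i, pd n i (A1 i) x) -
          ∑ i, ∑ k, pd n i (pd n k (fun y => A2 y k i)) x) /
        ((lam0 - 1) * (2 * lam0 - 1)))) :=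
  ⟨aux_exist n lam0 h0 hhalf h1 A2 A1 A0 hA2 hA1,
   aux_uniq n lam0 h0 hhalf h1 A2 A1 A0 hA2symm hA2 hA1⟩
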